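/- arXiv:math/0009234 — 6 statements merged into one kernel-verified Lean document; each statement's English description precedes it below -/
import Mathlib

section
/- Let R be a ring and let f : C → D be a chain map of nonnegatively graded chain complexes of R-modules such that C_0 is a projective R-module and the induced map H_0(f) : H_0(C) → H_0(D) is bijective. Suppose g_0 : D_0 → C_0 and s : D_0 → D_1 are R-linear maps satisfying f_0 ∘ g_0 + d ∘ s = id_{D_0}. Then there exists an R-linear map t : C_0 → C_1 such that g_0 ∘ f_0 + d ∘ t = id_{C_0}. -/
/-!
For `x ∈ C₀`, the identity `f₀ g₀ + d s = 1` shows that `f₀ (x - g₀ f₀ x) = d (s f₀ x)` is a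
boundary in `D`. Since `H₀ = C₀ / d C₁` is the cokernel of `d`, injectivity of `H₀(f)` makes
`x - g₀ f₀ x` a boundary in `C`. So `1 - g₀ f₀` maps the projective module `C₀` into the image of
`d : C₁ → C₀`, and lifting it along `d` gives `t`.
-/

open CategoryTheory

namespace Module

theorem projective_lifting_property_of_range_le {R P M N : Type*} [Semiring R]
    [AddCommMonoid P] [Module R P] [Projective R P] [AddCommMonoid M] [Module R M]
    [AddCommMonoid N] [Module R N] (f : M →ₗ[R] N) (g : P →ₗ[R] N)
    (hfg : LinearMap.range g ≤ LinearMap.range f) : ∃ h : P →ₗ[R] M, f ∘ₗ h = g := by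
  obtain ⟨h, hh⟩ := projective_lifting_property f.rangeRestrict (g.codRestrict _ fun x ↦
    hfg ⟨x, rfl⟩) f.surjective_rangeRestrict
  exact ⟨h, LinearMap.ext fun x ↦ congrArg Subtype.val (LinearMap.congr_fun hh x)⟩

end Module

namespace HomologicalComplex

variable {R ι : Type*} [Ring R] {c : ComplexShape ι}

theorem moduleCat_pOpcycles_eq_zero_iff (K : HomologicalComplex (ModuleCat R) c) {i j : ι}
    (hij : c.prev j = i) (x : K.X j) :
    K.pOpcycles j x = 0 ↔ x ∈ LinearMap.range (K.d i j).hom := by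
  let e := K.opcyclesIsoSc' i j (c.next j) hij rfl
  calc K.pOpcycles j x = 0 ↔ e.hom (K.pOpcycles j x) = 0 :=
        (map_eq_zero_iff _ e.toLinearEquiv.injective).symm
    _ ↔ x ∈ LinearMap.range (K.d i j).hom := by
        rw [← ModuleCat.comp_apply, K.pOpcycles_opcyclesIsoSc'_hom]
        exact (K.sc' i j (c.next j)).moduleCat_pOpcycles_eq_zero_iff x

theorem mem_range_d_of_injective_opcyclesMap {K L : HomologicalComplex (ModuleCat R) c}
    (f : K ⟶ L) {i j : ι} (hij : c.prev j = i) (hf : Function.Injective (opcyclesMap f j))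
    {x : K.X j} (hx : f.f j x ∈ LinearMap.range (L.d i j).hom) :
    x ∈ LinearMap.range (K.d i j).hom := by
  rw [← K.moduleCat_pOpcycles_eq_zero_iff hij, ← map_eq_zero_iff _ hf]
  rw [← L.moduleCat_pOpcycles_eq_zero_iff hij] at hx
  rw [← ModuleCat.comp_apply, p_opcyclesMap, ModuleCat.comp_apply, hx]

end HomologicalComplex

namespace ChainComplex

variable {R : Type*} [Ring R]

theorem injective_opcyclesMap_zero {C D : ChainComplex (ModuleCat R) ℕ} (f : C ⟶ D)
    (hf : Function.Injective (HomologicalComplex.homologyMap f 0)) :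
    Function.Injective (HomologicalComplex.opcyclesMap f 0) := by
  have hcomp : HomologicalComplex.opcyclesMap f 0 =
      C.isoHomologyι₀.inv ≫ HomologicalComplex.homologyMap f 0 ≫ D.isoHomologyι₀.hom := by
    rw [← Category.assoc, isoHomologyι₀_inv_naturality, Category.assoc, Iso.inv_hom_id,
      Category.comp_id]
  have : Mono (HomologicalComplex.homologyMap f 0) := (ModuleCat.mono_iff_injective _).2 hf
  rw [hcomp]
  exact (ModuleCat.mono_iff_injective _).1 inferInstance

end ChainComplex

/-- Identity (2) in the proof of the 1-skeleton alignment lemma: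
if `C₀` is projective, `H₀(f)` is bijective, and `f₀ ∘ g₀ + d ∘ s = id`, then
there is `t : C₀ → C₁` with `g₀ ∘ f₀ + d ∘ t = id`. -/
theorem statement1 {R : Type*} [Ring R]
    (C D : ChainComplex (ModuleCat R) ℕ) (f : C ⟶ D)
    (hproj : Module.Projective R (C.X 0))
    (hbij : Function.Bijective (HomologicalComplex.homologyMap f 0))
    (g₀ : D.X 0 ⟶ C.X 0) (s : D.X 0 ⟶ D.X 1)
    (h1 : g₀ ≫ f.f 0 + s ≫ D.d 1 0 = 𝟙 (D.X 0)) :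
    ∃ t : C.X 0 ⟶ C.X 1, f.f 0 ≫ g₀ + t ≫ C.d 1 0 = 𝟙 (C.X 0) := by
  have hrange : LinearMap.range (LinearMap.id - g₀.hom ∘ₗ (f.f 0).hom) ≤
      LinearMap.range (C.d 1 0).hom := by
    rintro _ ⟨x, rfl⟩
    refine HomologicalComplex.mem_range_d_of_injective_opcyclesMap f (ChainComplex.prev ℕ 0)
      (ChainComplex.injective_opcyclesMap_zero f hbij.injective) ⟨s (f.f 0 x), ?_⟩
    have hx : f.f 0 (g₀ (f.f 0 x)) + D.d 1 0 (s (f.f 0 x)) = f.f 0 x :=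
      congr(ModuleCat.Hom.hom $h1 (f.f 0 x))
    simp only [LinearMap.sub_apply, LinearMap.id_apply, LinearMap.comp_apply, map_sub]
    exact eq_sub_of_add_eq' hx
  obtain ⟨t, ht⟩ := Module.projective_lifting_property_of_range_le _ _ hrange
  refine ⟨ModuleCat.ofHom t, ModuleCat.hom_ext ?_⟩
  simpa using congr(g₀.hom ∘ₗ (f.f 0).hom + $ht)
end

section
/- Let R be a ring and let f : C → D be a chain map of nonnegatively graded chain complexes of R-modules such that C_0 and D_0 are projective R-modules, H_0(f) : H_0(C) → H_0(D) is bijective, and H_1(f) : H_1(C) → H_1(D) is surjective. Then there exist R-linear maps g_0 : D_0 → C_0, s : D_0 → D_1, t : C_0 → C_1, and u : C_0 → D_2 satisfying the three identities: f_0 ∘ g_0 + d ∘ s = id_{D_0}, g_0 ∘ f_0 + d ∘ t = id_{C_0}, and d ∘ u + f_1 ∘ t = s ∘ f_0. -/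
/-!
Work with morphisms out of projective objects instead of elements. Surjectivity of `H₀(f)`,
tested on `𝟙 : D₀ → D₀`, gives `g₀` and `s`; injectivity of `H₀(f)` makes the
degree-zero cycle `𝟙 - g₀ f₀` of `C` a boundary `d t`. Then `s f₀ - f₁ t` is a 1-cycle of `D`,
and surjectivity of `H₁(f)` writes it as `f₁ x + d u` with `x` a 1-cycle of `C`, so replacing `t`
by `t + x` gives the third identity without disturbing the second.
-/

open CategoryTheory

namespace HomologicalComplex

variable {C ι : Type*} [Category* C] [Abelian C] {c : ComplexShape ι}
  {K L : HomologicalComplex C c} (φ : K ⟶ L) {P : C} [Projective P] {i j k : ι}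

lemma exists_lift_of_epi_homologyMap [Epi (homologyMap φ j)]
    (hi : c.prev j = i) (hk : c.next j = k) (y : P ⟶ L.X j) (hy : y ≫ L.d j k = 0) :
    ∃ (x : P ⟶ K.X j) (_ : x ≫ K.d j k = 0) (w : P ⟶ L.X i),
      y = x ≫ φ.f j + w ≫ L.d i j := by
  obtain ⟨A, π, _, x, hx, w, hπ⟩ :=
    (epi_homologyMap_iff_up_to_refinements φ i j k hi hk).1 inferInstance y hy
  -- the refining epimorphism `π` splits because `P` is projective
  let σ := Projective.factorThru (𝟙 P) π
  have hσ : σ ≫ π = 𝟙 P := Projective.factorThru_comp _ _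
  refine ⟨σ ≫ x, by simp [hx], σ ≫ w, ?_⟩
  simpa [reassoc_of% hσ] using σ ≫= hπ

lemma exists_lift_of_mono_homologyMap [Mono (homologyMap φ j)]
    (hi : c.prev j = i) (hk : c.next j = k) (x : P ⟶ K.X j) (hx : x ≫ K.d j k = 0)
    (w : P ⟶ L.X i) (hw : x ≫ φ.f j = w ≫ L.d i j) :
    ∃ v : P ⟶ K.X i, x = v ≫ K.d i j := by
  obtain ⟨A, π, _, v, hπ⟩ :=
    (mono_homologyMap_iff_up_to_refinements φ i j k hi hk).1 inferInstance x hx w hw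
  let σ := Projective.factorThru (𝟙 P) π
  have hσ : σ ≫ π = 𝟙 P := Projective.factorThru_comp _ _
  exact ⟨σ ≫ v, by simpa [reassoc_of% hσ] using σ ≫= hπ⟩

end HomologicalComplex

namespace ChainComplex

variable {C : Type*} [Category* C] [Abelian C] {K L : ChainComplex C ℕ} (φ : K ⟶ L)

theorem exists_degreeZero_alignment [Projective (K.X 0)] [Projective (L.X 0)]
    [IsIso (HomologicalComplex.homologyMap φ 0)] [Epi (HomologicalComplex.homologyMap φ 1)] :
    ∃ (g₀ : L.X 0 ⟶ K.X 0) (s : L.X 0 ⟶ L.X 1) (t : K.X 0 ⟶ K.X 1) (u : K.X 0 ⟶ L.X 2),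
      g₀ ≫ φ.f 0 + s ≫ L.d 1 0 = 𝟙 (L.X 0) ∧
      φ.f 0 ≫ g₀ + t ≫ K.d 1 0 = 𝟙 (K.X 0) ∧
      u ≫ L.d 2 1 + t ≫ φ.f 1 = φ.f 0 ≫ s := by
  obtain ⟨g₀, -, s, hs⟩ := HomologicalComplex.exists_lift_of_epi_homologyMap φ
    (by simp : (ComplexShape.down ℕ).prev 0 = 1) (by simp : (ComplexShape.down ℕ).next 0 = 0)
    (𝟙 (L.X 0)) (by simp)
  have hsd : s ≫ L.d 1 0 = 𝟙 (L.X 0) - g₀ ≫ φ.f 0 := eq_sub_of_add_eq' hs.symm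
  obtain ⟨t, ht⟩ := HomologicalComplex.exists_lift_of_mono_homologyMap φ
    (by simp : (ComplexShape.down ℕ).prev 0 = 1) (by simp : (ComplexShape.down ℕ).next 0 = 0)
    (𝟙 (K.X 0) - φ.f 0 ≫ g₀) (by simp) (φ.f 0 ≫ s)
    (by simp [hsd, Preadditive.comp_sub, Preadditive.sub_comp])
  have hz : (φ.f 0 ≫ s - t ≫ φ.f 1) ≫ L.d 1 0 = 0 := by
    simp [Preadditive.sub_comp, hsd, ← reassoc_of% ht, Preadditive.comp_sub]
  obtain ⟨x, hx, u, hu⟩ := HomologicalComplex.exists_lift_of_epi_homologyMap φ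
    (by simp : (ComplexShape.down ℕ).prev 1 = 2) (by simp : (ComplexShape.down ℕ).next 1 = 0)
    _ hz
  refine ⟨g₀, s, t + x, u, hs.symm, ?_, ?_⟩
  · rw [Preadditive.add_comp, hx, add_zero, ← ht]
    abel
  · rw [Preadditive.add_comp, eq_sub_of_add_eq' hu.symm]
    abel

end ChainComplex

/-- Identities (1), (2), (3) in the proof of the 1-skeleton alignment lemma:
given `C₀`, `D₀` projective, `H₀(f)` bijective and `H₁(f)` surjective, there are
`g₀ : D₀ → C₀`, `s : D₀ → D₁`, `t : C₀ → C₁`, `u : C₀ → D₂` with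
`f₀ ∘ g₀ + d ∘ s = id`, `g₀ ∘ f₀ + d ∘ t = id` and `d ∘ u + f₁ ∘ t = s ∘ f₀`. -/
theorem statement3 {R : Type*} [Ring R]
    (C D : ChainComplex (ModuleCat R) ℕ) (f : C ⟶ D)
    (hCproj : Module.Projective R (C.X 0))
    (hDproj : Module.Projective R (D.X 0))
    (h0 : Function.Bijective (HomologicalComplex.homologyMap f 0))
    (h1 : Function.Surjective (HomologicalComplex.homologyMap f 1)) :
    ∃ (g₀ : D.X 0 ⟶ C.X 0) (s : D.X 0 ⟶ D.X 1) (t : C.X 0 ⟶ C.X 1) (u : C.X 0 ⟶ D.X 2),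
      g₀ ≫ f.f 0 + s ≫ D.d 1 0 = 𝟙 (D.X 0) ∧
      f.f 0 ≫ g₀ + t ≫ C.d 1 0 = 𝟙 (C.X 0) ∧
      u ≫ D.d 2 1 + t ≫ f.f 1 = f.f 0 ≫ s := by
  have : IsIso (HomologicalComplex.homologyMap f 0) := (ConcreteCategory.isIso_iff_bijective _).2 h0
  have : Epi (HomologicalComplex.homologyMap f 1) := (ModuleCat.epi_iff_surjective _).2 h1
  exact ChainComplex.exists_degreeZero_alignment f
end

section
/- Let R be a ring, let M be a projective R-module, and let f : C → D be a chain map of nonnegatively graded chain complexes of R-modules with C_0 = D_0 = M, such that the image of (id_M − f_0) : M → M is contained in the image of the differential d : D_1 → D_0 = M. Then there exists a chain map f' : C → D which is chain homotopic to f, with f'_0 = id_M and f'_n = f_n for all n ≥ 2. -/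
/-!
By projectivity of `M`, the map `id_M - f₀` lifts through `d : D₁ → M` to some `σ : M → D₁`.
Adding to `f` the null-homotopic map `d σ + σ d` built from `σ` alone turns `f₀` into
`f₀ + d σ = id_M` and changes only `f₁` besides.
-/

open CategoryTheory

theorem Module.Projective.exists_comp_eq_of_range_le {R P M N : Type*} [Ring R]
    [AddCommGroup P] [Module R P] [Module.Projective R P]
    [AddCommGroup M] [Module R M] [AddCommGroup N] [Module R N]
    (p : M →ₗ[R] N) (g : P →ₗ[R] N) (h : LinearMap.range g ≤ LinearMap.range p) :
    ∃ σ : P →ₗ[R] M, p ∘ₗ σ = g := by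
  obtain ⟨σ, hσ⟩ := Module.projective_lifting_property p.rangeRestrict
    (g.codRestrict _ fun x => h (LinearMap.mem_range_self g x)) p.surjective_rangeRestrict
  exact ⟨σ, LinearMap.ext fun x => congrArg Subtype.val (LinearMap.congr_fun hσ x)⟩

namespace ChainComplex

variable {V : Type*} [Category V] [Preadditive V] {C D : ChainComplex V ℕ}

def homotopyHomOfDegreeZero (σ : C.X 0 ⟶ D.X 1) : ∀ i j, C.X i ⟶ D.X j
  | 0, 1 => σ
  | _, _ => 0

lemma nullHomotopicMap_homotopyHomOfDegreeZero_f_zero (σ : C.X 0 ⟶ D.X 1) :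
    (Homotopy.nullHomotopicMap (homotopyHomOfDegreeZero σ)).f 0 = σ ≫ D.d 1 0 :=
  Homotopy.nullHomotopicMap_f_of_not_rel_left (c := ComplexShape.down ℕ) rfl
    (fun _ => Nat.succ_ne_zero _) _

lemma nullHomotopicMap_homotopyHomOfDegreeZero_f_of_two_le (σ : C.X 0 ⟶ D.X 1) {n : ℕ}
    (hn : 2 ≤ n) : (Homotopy.nullHomotopicMap (homotopyHomOfDegreeZero σ)).f n = 0 := by
  obtain ⟨m, rfl⟩ := Nat.exists_eq_add_of_le' hn
  rw [Homotopy.nullHomotopicMap_f (c := ComplexShape.down ℕ) (k₂ := m + 3) (k₁ := m + 2)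
    (k₀ := m + 1) rfl rfl]
  simp [homotopyHomOfDegreeZero]

theorem exists_homotopic_f_zero_eq_add (f : C ⟶ D) (σ : C.X 0 ⟶ D.X 1) :
    ∃ f' : C ⟶ D, Nonempty (Homotopy f' f) ∧ f'.f 0 = f.f 0 + σ ≫ D.d 1 0 ∧
      ∀ n, 2 ≤ n → f'.f n = f.f n := by
  let h := Homotopy.nullHomotopy (homotopyHomOfDegreeZero σ) fun i j hij => by
    rcases i with _ | _ <;> rcases j with _ | _ | _ <;> first | rfl | exact absurd rfl hij
  refine ⟨f + Homotopy.nullHomotopicMap (homotopyHomOfDegreeZero σ),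
    ⟨((Homotopy.refl f).add h).trans (Homotopy.ofEq (add_zero f))⟩, ?_, fun n hn => ?_⟩
  · rw [HomologicalComplex.add_f_apply, nullHomotopicMap_homotopyHomOfDegreeZero_f_zero]
  · rw [HomologicalComplex.add_f_apply,
      nullHomotopicMap_homotopyHomOfDegreeZero_f_of_two_le σ hn, add_zero]

end ChainComplex

/-- Degree-0 normalization: if `C₀ = D₀ = M` with `M` projective and the image of
`id_M - f₀` is contained in the image of `d : D₁ → D₀ = M`, then `f` is chain
homotopic to a chain map `f'` with `f'₀ = id_M` and `f'ₙ = fₙ` for `n ≥ 2`. -/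
theorem statement5 {R : Type*} [Ring R] (M : ModuleCat R)
    (hM : Module.Projective R M)
    (C D : ChainComplex (ModuleCat R) ℕ) (f : C ⟶ D)
    (hC0 : C.X 0 = M) (hD0 : D.X 0 = M)
    (him : LinearMap.range (𝟙 M - (eqToHom hC0.symm ≫ f.f 0 ≫ eqToHom hD0)).hom ≤
           LinearMap.range (D.d 1 0 ≫ eqToHom hD0).hom) :
    ∃ f' : C ⟶ D, Nonempty (Homotopy f' f) ∧
      f'.f 0 = eqToHom hC0 ≫ eqToHom hD0.symm ∧
      ∀ n, 2 ≤ n → f'.f n = f.f n := by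
  subst hC0
  obtain ⟨σ, hσ⟩ := hM.exists_comp_eq_of_range_le _ _ him
  have hσd : ModuleCat.ofHom σ ≫ D.d 1 0 = eqToHom hD0.symm - f.f 0 := by
    have hσ' : ModuleCat.ofHom σ ≫ D.d 1 0 ≫ eqToHom hD0 = 𝟙 _ - f.f 0 ≫ eqToHom hD0 :=
      ModuleCat.hom_ext hσ
    simpa [Preadditive.sub_comp] using hσ' =≫ eqToHom hD0.symm
  obtain ⟨f', hf', hf'0, hf'n⟩ := ChainComplex.exists_homotopic_f_zero_eq_add f (ModuleCat.ofHom σ)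
  exact ⟨f', hf', by rw [hf'0, hσd, add_sub_cancel, eqToHom_refl, Category.id_comp], hf'n⟩
end

section
/- Let R be a ring and let f : C → D be a chain map of nonnegatively graded chain complexes of R-modules such that D_1 is a projective R-module, f_0 : C_0 → D_0 is bijective, H_0(f) : H_0(C) → H_0(D) is bijective, and H_1(f) : H_1(C) → H_1(D) is surjective. Then there exist R-linear maps g : D_1 → C_1 and s : D_1 → D_2 such that f_1 ∘ g + d ∘ s = id_{D_1}, where d : D_2 → D_1 is the differential. -/
/-!
Let `ψ : C₁ × D₂ → D₁` be `(c, e) ↦ f₁ c + d e`. Since `D₁` is projective, it suffices to show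
that `ψ` is surjective, for then the identity of `D₁` lifts along `ψ` to the pair `(g, s)`.
Given `x ∈ D₁`, write `d x = f₀ c₀`. Then `c₀` is a cycle whose image is a boundary, so by
injectivity of `H₀(f)` we get `c₀ = d c₁`, and `x - f₁ c₁` is a cycle of `D₁`. By surjectivity
of `H₁(f)` it is homologous to the image of a cycle of `C₁`, i.e. it lies in the image of `ψ`.
-/

open CategoryTheory

namespace HomologicalComplex

variable {R : Type*} [Ring R] {ι : Type*} {c : ComplexShape ι}

lemma exists_iCycles_apply_eq (K : HomologicalComplex (ModuleCat R) c) {i j : ι}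
    (hj : c.next i = j) {y : K.X i} (hy : K.d i j y = 0) :
    ∃ z : K.cycles i, K.iCycles i z = y := by
  subst hj
  exact ⟨(K.sc i).moduleCatCyclesIso.inv ⟨y, hy⟩,
    (K.sc i).moduleCatCyclesIso_inv_iCycles_apply ⟨y, hy⟩⟩

lemma exists_toCycles_apply_eq (K : HomologicalComplex (ModuleCat R) c) {i j : ι}
    (hi : c.prev j = i) {z : K.cycles j} (hz : K.homologyπ j z = 0) :
    ∃ b : K.X i, K.toCycles i j b = z := by
  have hexact : (ShortComplex.mk (K.toCycles i j) (K.homologyπ j)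
      (K.toCycles_comp_homologyπ i j)).Exact :=
    ShortComplex.exact_of_g_is_cokernel _ (K.homologyIsCokernel i j hi)
  exact (ShortComplex.moduleCat_exact_iff _).1 hexact z hz

lemma homologyπ_surjective (K : HomologicalComplex (ModuleCat R) c) (i : ι) :
    Function.Surjective (K.homologyπ i) :=
  (ModuleCat.epi_iff_surjective _).1 inferInstance

lemma iCycles_injective (K : HomologicalComplex (ModuleCat R) c) (i : ι) :
    Function.Injective (K.iCycles i) :=
  (ModuleCat.mono_iff_injective _).1 inferInstance

lemma iCycles_toCycles_apply (K : HomologicalComplex (ModuleCat R) c) (i j : ι) (x : K.X i) :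
    K.iCycles j (K.toCycles i j x) = K.d i j x :=
  ConcreteCategory.congr_hom (K.toCycles_i i j) x

lemma iCycles_cyclesMap_apply {K L : HomologicalComplex (ModuleCat R) c} (f : K ⟶ L) (i : ι)
    (z : K.cycles i) :
    L.iCycles i (cyclesMap f i z) = f.f i (K.iCycles i z) :=
  ConcreteCategory.congr_hom (cyclesMap_i f i) z

lemma homologyπ_cyclesMap_apply {K L : HomologicalComplex (ModuleCat R) c} (f : K ⟶ L) (i : ι)
    (z : K.cycles i) :
    L.homologyπ i (cyclesMap f i z) = homologyMap f i (K.homologyπ i z) :=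
  (ConcreteCategory.congr_hom (homologyπ_naturality f i) z).symm

lemma exists_d_apply_eq_of_homologyMap_injective {K L : HomologicalComplex (ModuleCat R) c}
    (f : K ⟶ L) {i j k : ι} (hk : c.prev i = k) (hj : c.next i = j)
    (hf : Function.Injective (homologyMap f i))
    {z : K.X i} (hz : K.d i j z = 0) {w : L.X k} (hw : f.f i z = L.d k i w) :
    ∃ b : K.X k, K.d k i b = z := by
  obtain ⟨z', rfl⟩ := K.exists_iCycles_apply_eq hj hz
  have hz' : cyclesMap f i z' = L.toCycles k i w :=
    L.iCycles_injective i (by rw [iCycles_cyclesMap_apply, iCycles_toCycles_apply, hw])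
  have hπ : K.homologyπ i z' = 0 := hf <| by
    rw [← homologyπ_cyclesMap_apply, hz', map_zero]
    exact ConcreteCategory.congr_hom (L.toCycles_comp_homologyπ k i) w
  obtain ⟨b, rfl⟩ := K.exists_toCycles_apply_eq hk hπ
  exact ⟨b, (K.iCycles_toCycles_apply k i b).symm⟩

lemma exists_add_d_apply_eq_of_homologyMap_surjective {K L : HomologicalComplex (ModuleCat R) c}
    (f : K ⟶ L) {i j k : ι} (hk : c.prev i = k) (hj : c.next i = j)
    (hf : Function.Surjective (homologyMap f i))
    {y : L.X i} (hy : L.d i j y = 0) :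
    ∃ (a : K.X i) (e : L.X k), f.f i a + L.d k i e = y := by
  obtain ⟨y', rfl⟩ := L.exists_iCycles_apply_eq hj hy
  obtain ⟨h, hh⟩ := hf (L.homologyπ i y')
  obtain ⟨a', rfl⟩ := K.homologyπ_surjective i h
  have hπ : L.homologyπ i (cyclesMap f i a' - y') = 0 := by
    rw [map_sub, homologyπ_cyclesMap_apply, hh, sub_self]
  obtain ⟨e, he⟩ := L.exists_toCycles_apply_eq hk hπ
  refine ⟨K.iCycles i a', -e, ?_⟩
  rw [map_neg, ← iCycles_toCycles_apply, he, map_sub, iCycles_cyclesMap_apply]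
  abel

end HomologicalComplex

namespace ChainComplex

open HomologicalComplex

variable {R : Type*} [Ring R] {C D : ChainComplex (ModuleCat R) ℕ}

lemma surjective_coprod_f_one_d_of_homologyMap (f : C ⟶ D)
    (hf0 : Function.Surjective (f.f 0)) (h0 : Function.Injective (homologyMap f 0))
    (h1 : Function.Surjective (homologyMap f 1)) :
    Function.Surjective ((f.f 1).hom.coprod (D.d 2 1).hom) := by
  intro x
  obtain ⟨c₀, hc₀⟩ := hf0 (D.d 1 0 x)
  have hc₀_cycle : C.d 0 0 c₀ = 0 := by rw [C.shape 0 0 (by simp)]; rfl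
  obtain ⟨c₁, hc₁⟩ :=
    exists_d_apply_eq_of_homologyMap_injective f (k := 1) (by simp) (by simp) h0 hc₀_cycle hc₀
  have hcycle : D.d 1 0 (x - f.f 1 c₁) = 0 := by
    rw [map_sub, ← ConcreteCategory.comp_apply, f.comm, ConcreteCategory.comp_apply, hc₁, hc₀,
      sub_self]
  obtain ⟨a, e, hae⟩ :=
    exists_add_d_apply_eq_of_homologyMap_surjective f (k := 2) (by simp) (by simp) h1 hcycle
  refine ⟨(c₁ + a, e), ?_⟩
  simp only [LinearMap.coprod_apply, map_add, add_assoc, hae]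
  abel

end ChainComplex

lemma ModuleCat.exists_comp_add_comp_eq_id {R : Type*} [Ring R] {A B P : ModuleCat R}
    [Module.Projective R P] (a : A ⟶ P) (b : B ⟶ P)
    (hab : Function.Surjective (a.hom.coprod b.hom)) :
    ∃ (g : P ⟶ A) (s : P ⟶ B), g ≫ a + s ≫ b = 𝟙 P := by
  obtain ⟨h, hh⟩ := Module.projective_lifting_property _ LinearMap.id hab
  refine ⟨ModuleCat.ofHom (LinearMap.fst R A B ∘ₗ h), ModuleCat.ofHom (LinearMap.snd R A B ∘ₗ h),
    ModuleCat.hom_ext (LinearMap.ext fun x => ?_)⟩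
  simpa using LinearMap.congr_fun hh x

/-- Identity (1) of the algebraic 1-skeleton alignment: if `D₁` is projective, `f₀`
is bijective, `H₀(f)` is bijective and `H₁(f)` is surjective, there are
`g : D₁ → C₁` and `s : D₁ → D₂` with `f₁ ∘ g + d ∘ s = id`. -/
theorem statement7 {R : Type*} [Ring R]
    (C D : ChainComplex (ModuleCat R) ℕ) (f : C ⟶ D)
    (hproj : Module.Projective R (D.X 1))
    (hf0 : Function.Bijective (f.f 0))
    (h0 : Function.Bijective (HomologicalComplex.homologyMap f 0))
    (h1 : Function.Surjective (HomologicalComplex.homologyMap f 1)) :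
    ∃ (g : D.X 1 ⟶ C.X 1) (s : D.X 1 ⟶ D.X 2),
      g ≫ f.f 1 + s ≫ D.d 2 1 = 𝟙 (D.X 1) :=
  ModuleCat.exists_comp_add_comp_eq_id _ _
    (ChainComplex.surjective_coprod_f_one_d_of_homologyMap f hf0.2 h0.1 h1)
end

section
/- Let R be a ring and let f : D → C be a chain map of nonnegatively graded chain complexes of R-modules such that D_n = 0 for all n ≥ 3 and the components f_0 and f_1 are isomorphisms. Then there exist a nonnegatively graded chain complex C' with C'_n = C_n for all n ∉ {2, 3}, with C'_2 isomorphic to C_2 ⊕ D_2 and C'_3 isomorphic to C_3 ⊕ D_2, a chain homotopy equivalence e : C → C' equal to the identity in all degrees n ∉ {2, 3}, and a chain map F : D → C' chain homotopic to e ∘ f, such that F_0 and F_1 are isomorphisms and F_2 : D_2 → C'_2 is a split monomorphism onto a direct summand of C'_2. -/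
/-!
Add to `C` the elementary complex `D₂ --id--> D₂` in degrees `3 → 2` (the cancelling pairs
indexed by `D₂`). It is contractible, so the inclusion `ι : C ⟶ C'` is a homotopy equivalence with
the projection `π` as inverse. Let `F` agree with `f ≫ ι` except for `F₂ = (f₂, id)`, which the
second projection splits; `F` is a chain map because `D₃ → D₂` vanishes. Since `F ≫ π = f` and
`π ≫ ι ≃ 𝟙`, `F` is homotopic to `f ≫ ι`.
-/

open CategoryTheory Limits

def HomotopyEquiv.homotopyOfCompInv {V : Type*} [Category V] [Preadditive V] {ι : Type*}
    {c : ComplexShape ι} {C C' D : HomologicalComplex V c} (e : HomotopyEquiv C C')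
    {f : D ⟶ C} {F : D ⟶ C'} (h : F ≫ e.inv = f) : Homotopy F (f ≫ e.hom) :=
  (Homotopy.ofEq (Category.comp_id F).symm).trans <|
    (e.homotopyInvHomId.symm.compLeft F).trans (Homotopy.ofEq (by rw [← h, Category.assoc]))

def ChainComplex.homotopyOfComponents {V : Type*} [Category V] [Preadditive V]
    {P Q : ChainComplex V ℕ} {f g : P ⟶ Q} (s : ∀ n, P.X n ⟶ Q.X (n + 1))
    (comm_zero : f.f 0 = s 0 ≫ Q.d 1 0 + g.f 0)
    (comm_succ : ∀ n,
      f.f (n + 1) = P.d (n + 1) n ≫ s n + s (n + 1) ≫ Q.d (n + 2) (n + 1) + g.f (n + 1)) :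
    Homotopy f g where
  hom i j := if h : i + 1 = j then s i ≫ eqToHom (congrArg Q.X h) else 0
  zero i j hij := dif_neg hij
  comm
    | 0 => by
      rw [Homotopy.dNext_zero_chainComplex, Homotopy.prevD_chainComplex]
      simpa using comm_zero
    | n + 1 => by
      rw [Homotopy.dNext_succ_chainComplex, Homotopy.prevD_chainComplex]
      simpa using comm_succ n

namespace ChainComplex.Stabilization

universe u v

variable {R : Type u} [Ring R] (C : ChainComplex (ModuleCat.{v} R) ℕ) (M : ModuleCat.{v} R)

-- Defined degreewise rather than as a biproduct so that `Xₙ` is literally `C.X n` for `n ≠ 2, 3`.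
def X : ℕ → ModuleCat R
  | 2 => ModuleCat.of R (C.X 2 × M)
  | 3 => ModuleCat.of R (C.X 3 × M)
  | n => C.X n

def d : ∀ n, X C M (n + 1) ⟶ X C M n
  | 0 => C.d 1 0
  | 1 => ModuleCat.ofHom ((C.d 2 1).hom ∘ₗ LinearMap.fst R _ _)
  | 2 => ModuleCat.ofHom ((C.d 3 2).hom.prodMap LinearMap.id)
  | 3 => ModuleCat.ofHom (LinearMap.inl R _ _ ∘ₗ (C.d 4 3).hom)
  | n + 4 => C.d (n + 5) (n + 4)

theorem d_comp_d (n : ℕ) : d C M (n + 1) ≫ d C M n = 0 := by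
  have h := fun i j k (x : C.X i) => ConcreteCategory.congr_hom (C.d_comp_d i j k) x
  rcases n with _ | _ | _ | _ | n <;> ext x
  exacts [h 2 1 0 x.1, h 3 2 1 x.1, Prod.ext (h 4 3 2 x) rfl, Prod.ext (h 5 4 3 x) rfl,
    h (n + 6) (n + 5) (n + 4) x]

def complex : ChainComplex (ModuleCat R) ℕ := ChainComplex.of (X C M) (d C M) (d_comp_d C M)

theorem complex_d (n : ℕ) : (complex C M).d (n + 1) n = d C M n := ChainComplex.of_d _ _ _

theorem X_of_ne : ∀ n, n ≠ 2 → n ≠ 3 → (complex C M).X n = C.X n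
  | 0, _, _ | 1, _, _ | _ + 4, _, _ => rfl

def ιf : ∀ n, C.X n ⟶ X C M n
  | 0 => 𝟙 (C.X 0)
  | 1 => 𝟙 (C.X 1)
  | 2 => ModuleCat.ofHom (LinearMap.inl R _ _)
  | 3 => ModuleCat.ofHom (LinearMap.inl R _ _)
  | n + 4 => 𝟙 (C.X (n + 4))

def πf : ∀ n, X C M n ⟶ C.X n
  | 0 => 𝟙 (C.X 0)
  | 1 => 𝟙 (C.X 1)
  | 2 => ModuleCat.ofHom (LinearMap.fst R _ _)
  | 3 => ModuleCat.ofHom (LinearMap.fst R _ _)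
  | n + 4 => 𝟙 (C.X (n + 4))

def ι : C ⟶ complex C M where
  f := ιf C M
  comm' := by
    rintro _ n rfl
    rw [complex_d]
    rcases n with _ | _ | _ | _ | n <;> rfl

def π : complex C M ⟶ C where
  f := πf C M
  comm' := by
    rintro _ n rfl
    rw [complex_d]
    rcases n with _ | _ | _ | _ | n <;> rfl

theorem ι_π : ι C M ≫ π C M = 𝟙 C := by
  ext n : 1
  rcases n with _ | _ | _ | _ | n <;> rfl

def contraction : ∀ n, (complex C M).X n ⟶ (complex C M).X (n + 1)
  | 0 => 0
  | 1 => 0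
  | 2 => ModuleCat.ofHom (LinearMap.inr R _ _ ∘ₗ LinearMap.snd R _ _)
  | 3 => 0
  | _ + 4 => 0

def homotopyIdπι : Homotopy (𝟙 _) (π C M ≫ ι C M) := by
  refine ChainComplex.homotopyOfComponents (contraction C M) ?_ fun n => ?_
  · simp only [contraction, zero_comp, zero_add]; rfl
  rcases n with _ | _ | _ | _ | n <;>
    simp only [contraction, zero_comp, comp_zero, zero_add, add_zero]
  · rfl
  · ext x
    change x = ((C.d 3 2).hom 0, x.2) + (x.1, 0)
    rw [map_zero]
    exact Prod.ext (zero_add _).symm (add_zero _).symm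
  · ext x
    change x = (0, x.2) + (x.1, 0)
    exact Prod.ext (zero_add _).symm (add_zero _).symm
  · rfl
  · rfl

def homotopyEquiv : HomotopyEquiv C (complex C M) where
  hom := ι C M
  inv := π C M
  homotopyHomInvId := Homotopy.ofEq (ι_π C M)
  homotopyInvHomId := (homotopyIdπι C M).symm

theorem ι_f_of_ne :
    ∀ n (h2 : n ≠ 2) (h3 : n ≠ 3), (ι C M).f n = eqToHom (X_of_ne C M n h2 h3).symm
  | 0, _, _ | 1, _, _ | _ + 4, _, _ => rfl

variable {C} {D : ChainComplex (ModuleCat.{v} R) ℕ} (f : D ⟶ C)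

def liftf : ∀ n, D.X n ⟶ X C (D.X 2) n
  | 2 => ModuleCat.ofHom ((f.f 2).hom.prod LinearMap.id)
  | n => f.f n ≫ ιf C (D.X 2) n

def lift (hD : D.d 3 2 = 0) : D ⟶ complex C (D.X 2) where
  f := liftf f
  comm' := by
    rintro _ n rfl
    rcases n with _ | _ | _ | n
    · exact f.comm 1 0
    · exact f.comm 2 1
    · ext x
      exact Prod.ext (ConcreteCategory.congr_hom (f.comm 3 2) x)
        (ConcreteCategory.congr_hom hD x).symm
    · exact (f ≫ ι C _).comm (n + 4) (n + 3)

theorem lift_π (hD : D.d 3 2 = 0) : lift f hD ≫ π C (D.X 2) = f := by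
  ext n : 1
  rcases n with _ | _ | _ | _ | n <;> rfl

end ChainComplex.Stabilization

open ChainComplex.Stabilization in
/-- Stabilization claim in the proof of the realization theorem: given `f : D → C`
with `D` concentrated in degrees `≤ 2` and `f₀`, `f₁` isomorphisms, there is a
complex `C'` equal to `C` outside degrees 2, 3, with `C'₂ ≅ C₂ ⊕ D₂` and
`C'₃ ≅ C₃ ⊕ D₂`, a chain homotopy equivalence `e : C → C'` which is the identity
outside degrees 2, 3, and a chain map `F : D → C'` chain homotopic to `e ∘ f` with
`F₀`, `F₁` isomorphisms and `F₂` a split monomorphism onto a direct summand. -/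
theorem statement10 {R : Type*} [Ring R]
    (C D : ChainComplex (ModuleCat R) ℕ) (f : D ⟶ C)
    (hD : ∀ n, 3 ≤ n → Limits.IsZero (D.X n))
    (h0 : IsIso (f.f 0)) (h1 : IsIso (f.f 1)) :
    ∃ (C' : ChainComplex (ModuleCat R) ℕ)
      (hX : ∀ n, n ≠ 2 → n ≠ 3 → C'.X n = C.X n),
      Nonempty ((C'.X 2) ≃ₗ[R] ((C.X 2) × (D.X 2))) ∧
      Nonempty ((C'.X 3) ≃ₗ[R] ((C.X 3) × (D.X 2))) ∧
      ∃ (e : HomotopyEquiv C C') (F : D ⟶ C'),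
        (∀ n (h2 : n ≠ 2) (h3 : n ≠ 3), e.hom.f n = eqToHom (hX n h2 h3).symm) ∧
        Nonempty (Homotopy F (f ≫ e.hom)) ∧
        IsIso (F.f 0) ∧ IsIso (F.f 1) ∧
        ∃ r : C'.X 2 ⟶ D.X 2, F.f 2 ≫ r = 𝟙 (D.X 2) := by
  have hD3 : D.d 3 2 = 0 := (hD 3 le_rfl).eq_of_src _ _
  refine ⟨complex C (D.X 2), X_of_ne C _, ⟨LinearEquiv.refl R _⟩, ⟨LinearEquiv.refl R _⟩,
    homotopyEquiv C _, lift f hD3, ι_f_of_ne C _,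
    ⟨(homotopyEquiv C _).homotopyOfCompInv (lift_π f hD3)⟩, h0, h1,
    ModuleCat.ofHom (LinearMap.snd R _ _), rfl⟩
end

section
/- Let R be a ring and let f : C → D be a chain homotopy equivalence between chain complexes of R-modules concentrated in degrees 0, 1, 2 (i.e. C_n = D_n = 0 for n ≥ 3). If the components f_0 : C_0 → D_0 and f_1 : C_1 → D_1 are isomorphisms, then f_2 : C_2 → D_2 is also an isomorphism. -/
/-!
Elementwise, a homotopy `f ≫ g ≃ 𝟙` reads `g (f x) = h (d x) + d (h x) + x`, and in the top degree
the middle term vanishes, so `g (f x) = x` for every top-degree cycle `x`; symmetrically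
`f (g y) = y`. If `f₂ x = 0` then `f₁ (d x) = 0`, so `x` is a cycle and `x = g (f x) = 0`.
Given `y : D₂`, the element `x₁ = f₁⁻¹ (d y)` is a cycle because `f₀` is injective, and the degree 1
identity turns it into the boundary `d x₂` with `x₂ = g y - h x₁`; then `y - f x₂` is a cycle,
hence equal to `f (g (y - f x₂))`.
-/

open CategoryTheory

namespace Homotopy

variable {V : Type*} [Category V] [Preadditive V] {C D : ChainComplex V ℕ} {φ ψ : C ⟶ D}

theorem comm_succ (H : Homotopy φ ψ) (n : ℕ) :
    φ.f (n + 1) = C.d (n + 1) n ≫ H.hom n (n + 1) +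
      H.hom (n + 1) (n + 2) ≫ D.d (n + 2) (n + 1) + ψ.f (n + 1) := by
  simpa only [dNext_succ_chainComplex, prevD_chainComplex] using H.comm (n + 1)

theorem comm_succ_of_isZero (H : Homotopy φ ψ) {n : ℕ} (hD : Limits.IsZero (D.X (n + 2))) :
    φ.f (n + 1) = C.d (n + 1) n ≫ H.hom n (n + 1) + ψ.f (n + 1) := by
  rw [H.comm_succ, hD.eq_zero_of_tgt (H.hom (n + 1) (n + 2)), Limits.zero_comp, add_zero]

end Homotopy

namespace HomotopyEquiv

variable {R : Type*} [Ring R] {C D : ChainComplex (ModuleCat R) ℕ}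

theorem inv_f_hom_f_apply_succ (e : HomotopyEquiv C D) (n : ℕ) (x : C.X (n + 1)) :
    e.inv.f (n + 1) (e.hom.f (n + 1) x) = e.homotopyHomInvId.hom n (n + 1) (C.d (n + 1) n x) +
      C.d (n + 2) (n + 1) (e.homotopyHomInvId.hom (n + 1) (n + 2) x) + x := by
  simpa using ConcreteCategory.congr_hom (e.homotopyHomInvId.comm_succ n) x

theorem hom_f_inv_f_apply_of_d_eq_zero (e : HomotopyEquiv C D) {n : ℕ}
    (hD : Limits.IsZero (D.X (n + 2))) {y : D.X (n + 1)} (hy : D.d (n + 1) n y = 0) :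
    e.hom.f (n + 1) (e.inv.f (n + 1) y) = y := by
  simpa [hy] using ConcreteCategory.congr_hom (e.homotopyInvHomId.comm_succ_of_isZero hD) y

theorem injective_hom_f_succ (e : HomotopyEquiv C D) {n : ℕ} (hC : Limits.IsZero (C.X (n + 2)))
    (h₀ : Function.Injective (e.hom.f n)) : Function.Injective (e.hom.f (n + 1)) := by
  refine (injective_iff_map_eq_zero _).2 fun x hx => ?_
  have hcycle : C.d (n + 1) n x = 0 :=
    h₀ (by rw [← ConcreteCategory.comp_apply, ← e.hom.comm, ConcreteCategory.comp_apply, hx,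
      map_zero, map_zero])
  rw [← e.symm.hom_f_inv_f_apply_of_d_eq_zero hC hcycle]
  exact (congrArg (e.inv.f (n + 1)) hx).trans (map_zero _)

theorem surjective_hom_f_succ_succ (e : HomotopyEquiv C D) {n : ℕ}
    (hD : Limits.IsZero (D.X (n + 3))) (h₀ : Function.Injective (e.hom.f n))
    (h₁ : Function.Surjective (e.hom.f (n + 1))) : Function.Surjective (e.hom.f (n + 2)) := by
  intro y
  obtain ⟨x₁, hx₁⟩ := h₁ (D.d (n + 2) (n + 1) y)
  have hcycle : C.d (n + 1) n x₁ = 0 :=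
    h₀ (by rw [← ConcreteCategory.comp_apply, ← e.hom.comm, ConcreteCategory.comp_apply, hx₁,
      map_zero]; exact ConcreteCategory.congr_hom (D.d_comp_d _ _ _) y)
  set x₂ := e.inv.f (n + 2) y - e.homotopyHomInvId.hom (n + 1) (n + 2) x₁
  have hboundary : C.d (n + 2) (n + 1) x₂ = x₁ := by
    have h := e.inv_f_hom_f_apply_succ n x₁
    rw [hcycle, map_zero, zero_add, hx₁, ← ConcreteCategory.comp_apply, ← e.inv.comm,
      ConcreteCategory.comp_apply] at h
    rw [map_sub, h, add_sub_cancel_left]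
  have hz : D.d (n + 2) (n + 1) (y - e.hom.f (n + 2) x₂) = 0 := by
    rw [map_sub, ← ConcreteCategory.comp_apply, e.hom.comm, ConcreteCategory.comp_apply,
      hboundary, hx₁, sub_self]
  refine ⟨x₂ + e.inv.f (n + 2) (y - e.hom.f (n + 2) x₂), ?_⟩
  rw [map_add, e.hom_f_inv_f_apply_of_d_eq_zero hD hz, add_sub_cancel]

end HomotopyEquiv

/-- A chain homotopy equivalence of complexes concentrated in degrees 0, 1, 2 which
is an isomorphism in degrees 0 and 1 is also an isomorphism in degree 2. -/
theorem statement11 {R : Type*} [Ring R]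
    (C D : ChainComplex (ModuleCat R) ℕ)
    (hC : ∀ n, 3 ≤ n → Limits.IsZero (C.X n))
    (hD : ∀ n, 3 ≤ n → Limits.IsZero (D.X n))
    (e : HomotopyEquiv C D)
    (h0 : IsIso (e.hom.f 0)) (h1 : IsIso (e.hom.f 1)) :
    IsIso (e.hom.f 2) := by
  rw [ConcreteCategory.isIso_iff_bijective] at h0 h1 ⊢
  exact ⟨e.injective_hom_f_succ (hC 3 le_rfl) h1.1,
    e.surjective_hom_f_succ_succ (hD 3 le_rfl) h0.1 h1.2⟩
end
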